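/- arXiv:1209.0988 — 9 statements merged into one kernel-verified Lean document; each statement's English description precedes it below -/
import Mathlib

section
/- Let (A, μ, α, η) be a unital Hom-associative algebra and β : A → A a linear map satisfying β∘μ = μ∘(β⊗β) (a weak morphism). Then (A, β∘μ, β∘α, η) is a unital Hom-associative algebra, i.e. the twisted product μ_β = β∘μ satisfies μ_β∘(μ_β⊗(β∘α)) = μ_β∘((β∘α)⊗μ_β) and μ_β∘(id⊗η) = μ_β∘(η⊗id) = β∘α. -/
/-- If `(A, μ, α, η)` is a unital Hom-associative algebra and
`β : A → A` is a weak morphism (`β∘μ = μ∘(β⊗β)`), then `(A, β∘μ, β∘α, η)` is a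
unital Hom-associative algebra. -/
theorem stmt1 {K A : Type*} [Field K] [AddCommGroup A] [Module K A]
    (μ : A →ₗ[K] A →ₗ[K] A) (α : A →ₗ[K] A) (β : A →ₗ[K] A) (one : A)
    (hassoc : ∀ x y z : A, μ (μ x y) (α z) = μ (α x) (μ y z))
    (hunit : ∀ x : A, μ x one = α x ∧ μ one x = α x)
    (hβ : ∀ x y : A, β (μ x y) = μ (β x) (β y)) :
    (∀ x y z : A, β (μ (β (μ x y)) (β (α z))) = β (μ (β (α x)) (β (μ y z)))) ∧
    (∀ x : A, β (μ x one) = β (α x) ∧ β (μ one x) = β (α x)) := by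
  -- The weak-morphism law turns `β ∘ μ ∘ (β ⊗ β)` into `β ∘ β ∘ μ`, so both sides are `β²` of `hassoc`.
  refine ⟨fun x y z => by rw [← hβ, ← hβ, hassoc], fun x => ?_⟩
  exact (hunit x).imp (congrArg β) (congrArg β)
end

section
/- Let (A, μ, η) be a unital associative algebra and α : A → A an algebra morphism (α∘μ = μ∘α⊗α, α(1)=1). Then (A, μ_α = α∘μ, α, η) is a unital Hom-associative algebra: (α∘μ)∘((α∘μ)⊗α) = (α∘μ)∘(α⊗(α∘μ)) and (α∘μ)(x⊗1) = (α∘μ)(1⊗x) = α(x) for all x. -/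
theorem stmt2_general {K A : Type*} [Field K] [AddCommGroup A] [Module K A]
    (μ : A →ₗ[K] A →ₗ[K] A) (α : A →ₗ[K] A) (one : A)
    (hassoc : ∀ x y z : A, μ (μ x y) z = μ x (μ y z))
    (hunit : ∀ x : A, μ x one = x ∧ μ one x = x)
    (hα_mul : ∀ x y : A, α (μ x y) = μ (α x) (α y)) :
    (∀ x y z : A, α (μ (α (μ x y)) (α z)) = α (μ (α x) (α (μ y z)))) ∧
    (∀ x : A, α (μ x one) = α x ∧ α (μ one x) = α x) :=
  ⟨fun x y z => by rw [← hα_mul, ← hα_mul, hassoc],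
    fun x => ⟨congrArg α (hunit x).1, congrArg α (hunit x).2⟩⟩

/-- If `(A, μ, η)` is a unital associative algebra and `α : A → A`
is an algebra morphism, then `(A, μ_α = α∘μ, α, η)` is a unital Hom-associative algebra. -/
theorem stmt2 {K A : Type*} [Field K] [AddCommGroup A] [Module K A]
    (μ : A →ₗ[K] A →ₗ[K] A) (α : A →ₗ[K] A) (one : A)
    (hassoc : ∀ x y z : A, μ (μ x y) z = μ x (μ y z))
    (hunit : ∀ x : A, μ x one = x ∧ μ one x = x)
    (hα_mul : ∀ x y : A, α (μ x y) = μ (α x) (α y))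
    (hα_one : α one = one) :
    (∀ x y z : A, α (μ (α (μ x y)) (α z)) = α (μ (α x) (α (μ y z)))) ∧
    (∀ x : A, α (μ x one) = α x ∧ α (μ one x) = α x) :=
  stmt2_general μ α one hassoc hunit hα_mul
end

section
/- Let A = K³ with basis {x₁, x₂, x₃}, multiplication μ defined by μ(x₁,x₁)=a x₁, μ(x₁,x₂)=μ(x₂,x₁)=a x₂, μ(x₁,x₃)=μ(x₃,x₁)=b x₃, μ(x₂,x₂)=a x₂, μ(x₂,x₃)=b x₃, μ(x₃,x₂)=μ(x₃,x₃)=0, and linear map α defined by α(x₁)=a x₁, α(x₂)=a x₂, α(x₃)=b x₃, where a, b ∈ K. Then (A, μ, α) is a Hom-associative algebra, and over a field of characteristic 0, if a ≠ b and b ≠ 0 the multiplication μ is not associative, since μ(μ(x₁,x₁),x₃) − μ(x₁,μ(x₁,x₃)) = (a−b)b x₃ ≠ 0. -/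
namespace HomAssocExample

variable {R : Type*} [CommRing R] (a b : R)

def mul (u v : Fin 3 → R) : Fin 3 → R :=
  ![a * (u 0 * v 0),
    a * (u 0 * v 1 + u 1 * v 0 + u 1 * v 1),
    b * (u 0 * v 2 + u 2 * v 0 + u 1 * v 2)]

def twist (u : Fin 3 → R) : Fin 3 → R :=
  ![a * u 0, a * u 1, b * u 2]

theorem mul_mul_twist (u v w : Fin 3 → R) :
    mul a b (mul a b u v) (twist a b w) = mul a b (twist a b u) (mul a b v w) := by
  funext i
  fin_cases i <;> simp only [mul, twist, Fin.zero_eta, Fin.mk_one, Fin.reduceFinMk,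
    Matrix.cons_val] <;> ring

theorem mul_mul_sub_mul_mul_basis :
    mul a b (mul a b ![1, 0, 0] ![1, 0, 0]) ![0, 0, 1]
        - mul a b ![1, 0, 0] (mul a b ![1, 0, 0] ![0, 0, 1])
      = ((a - b) * b) • ![(0 : R), 0, 1] := by
  funext i
  fin_cases i <;> simp only [mul, Fin.zero_eta, Fin.mk_one, Fin.reduceFinMk, Pi.sub_apply,
    Pi.smul_apply, smul_eq_mul, Matrix.cons_val] <;> ring

end HomAssocExample

theorem stmt3_general {K : Type*} [Field K] (a b : K)
    (μ : (Fin 3 → K) → (Fin 3 → K) → (Fin 3 → K))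
    (α : (Fin 3 → K) → (Fin 3 → K))
    (hμ : ∀ u v : Fin 3 → K,
      μ u v = ![a * (u 0 * v 0),
                a * (u 0 * v 1 + u 1 * v 0 + u 1 * v 1),
                b * (u 0 * v 2 + u 2 * v 0 + u 1 * v 2)])
    (hα : ∀ u : Fin 3 → K, α u = ![a * u 0, a * u 1, b * u 2]) :
    (∀ u v w : Fin 3 → K, μ (μ u v) (α w) = μ (α u) (μ v w)) ∧
    (a ≠ b → b ≠ 0 →
      μ (μ ![1,0,0] ![1,0,0]) ![0,0,1] - μ ![1,0,0] (μ ![1,0,0] ![0,0,1])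
        = ((a - b) * b) • ![(0:K),0,1] ∧
      ((a - b) * b) • ![(0:K),0,1] ≠ 0) := by
  obtain rfl : μ = HomAssocExample.mul a b := funext₂ hμ
  obtain rfl : α = HomAssocExample.twist a b := funext hα
  refine ⟨HomAssocExample.mul_mul_twist a b, fun hab hb =>
    ⟨HomAssocExample.mul_mul_sub_mul_mul_basis a b, ?_⟩⟩
  refine smul_ne_zero (mul_ne_zero (sub_ne_zero.mpr hab) hb) fun h => ?_
  simpa using congrFun h 2

/-- The 3-dimensional example: `(K³, μ, α)` is a Hom-associative
algebra, and over a field of characteristic `0`, if `a ≠ b` and `b ≠ 0` the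
multiplication `μ` is not associative, since
`μ(μ(x₁,x₁),x₃) − μ(x₁,μ(x₁,x₃)) = (a−b)·b·x₃ ≠ 0`. -/
theorem stmt3 {K : Type*} [Field K] [CharZero K] (a b : K)
    (μ : (Fin 3 → K) → (Fin 3 → K) → (Fin 3 → K))
    (α : (Fin 3 → K) → (Fin 3 → K))
    (hμ : ∀ u v : Fin 3 → K,
      μ u v = ![a * (u 0 * v 0),
                a * (u 0 * v 1 + u 1 * v 0 + u 1 * v 1),
                b * (u 0 * v 2 + u 2 * v 0 + u 1 * v 2)])
    (hα : ∀ u : Fin 3 → K, α u = ![a * u 0, a * u 1, b * u 2]) :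
    (∀ u v w : Fin 3 → K, μ (μ u v) (α w) = μ (α u) (μ v w)) ∧
    (a ≠ b → b ≠ 0 →
      μ (μ ![1,0,0] ![1,0,0]) ![0,0,1] - μ ![1,0,0] (μ ![1,0,0] ![0,0,1])
        = ((a - b) * b) • ![(0:K),0,1] ∧
      ((a - b) * b) • ![(0:K),0,1] ≠ 0) :=
  stmt3_general a b μ α hμ hα
end

section
/- Let (A, Δ, α, ε) be a counital Hom-coassociative coalgebra and β : A → A a linear map satisfying (β⊗β)∘Δ = Δ∘β. Then (A, Δ_β = Δ∘β, α∘β, ε) is a counital Hom-coassociative coalgebra: ((α∘β)⊗Δ_β)∘Δ_β = (Δ_β⊗(α∘β))∘Δ_β and (id⊗ε)∘Δ_β = (ε⊗id)∘Δ_β = α∘β. -/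
open TensorProduct

namespace HomCoalgebra

variable {R A : Type*} [CommSemiring R] [AddCommMonoid A] [Module R A]

def IsHomCoassociative (Δ : A →ₗ[R] A ⊗[R] A) (α : A →ₗ[R] A) : Prop :=
  ∀ x : A, map α Δ (Δ x) = TensorProduct.assoc R A A A (map Δ α (Δ x))

def IsCounit (Δ : A →ₗ[R] A ⊗[R] A) (α : A →ₗ[R] A) (ε : A →ₗ[R] R) : Prop :=
  ∀ x : A, TensorProduct.lid R A (map ε LinearMap.id (Δ x)) = α x ∧
    TensorProduct.rid R A (map LinearMap.id ε (Δ x)) = α x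

def IsWeakMorphism (Δ : A →ₗ[R] A ⊗[R] A) (β : A →ₗ[R] A) : Prop :=
  ∀ x : A, map β β (Δ x) = Δ (β x)

variable {Δ : A →ₗ[R] A ⊗[R] A} {α β : A →ₗ[R] A}

theorem IsWeakMorphism.map_comp_comp_apply {B C : Type*} [AddCommMonoid B] [Module R B]
    [AddCommMonoid C] [Module R C] (hβ : IsWeakMorphism Δ β) (f : A →ₗ[R] B) (g : A →ₗ[R] C)
    (x : A) : map (f ∘ₗ β) (g ∘ₗ β) (Δ x) = map f g (Δ (β x)) := by
  rw [map_comp, LinearMap.comp_apply, hβ]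

theorem IsHomCoassociative.twist (h : IsHomCoassociative Δ α) (hβ : IsWeakMorphism Δ β) :
    IsHomCoassociative (Δ ∘ₗ β) (α ∘ₗ β) := by
  intro x
  simp only [LinearMap.comp_apply, hβ.map_comp_comp_apply]
  exact h (β (β x))

theorem IsCounit.twist {ε : A →ₗ[R] R} (h : IsCounit Δ α ε) :
    IsCounit (Δ ∘ₗ β) (α ∘ₗ β) ε :=
  fun x => h (β x)

end HomCoalgebra

/-- If `(A, Δ, α, ε)` is a counital Hom-coassociative coalgebra and
`β` a weak Hom-coalgebra morphism (`(β⊗β)∘Δ = Δ∘β`), then `(A, Δ_β = Δ∘β, α∘β, ε)`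
is a counital Hom-coassociative coalgebra. -/
theorem stmt4 {K A : Type*} [Field K] [AddCommGroup A] [Module K A]
    (Δ : A →ₗ[K] A ⊗[K] A) (α β : A →ₗ[K] A) (ε : A →ₗ[K] K)
    (hcoassoc : ∀ x : A,
      TensorProduct.map α Δ (Δ x)
        = TensorProduct.assoc K A A A (TensorProduct.map Δ α (Δ x)))
    (hcounit : ∀ x : A,
      TensorProduct.lid K A (TensorProduct.map ε LinearMap.id (Δ x)) = α x ∧
      TensorProduct.rid K A (TensorProduct.map LinearMap.id ε (Δ x)) = α x)
    (hβ : ∀ x : A, TensorProduct.map β β (Δ x) = Δ (β x)) :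
    (∀ x : A,
      TensorProduct.map (α ∘ₗ β) (Δ ∘ₗ β) ((Δ ∘ₗ β) x)
        = TensorProduct.assoc K A A A (TensorProduct.map (Δ ∘ₗ β) (α ∘ₗ β) ((Δ ∘ₗ β) x))) ∧
    (∀ x : A,
      TensorProduct.lid K A (TensorProduct.map ε LinearMap.id ((Δ ∘ₗ β) x)) = (α ∘ₗ β) x ∧
      TensorProduct.rid K A (TensorProduct.map LinearMap.id ε ((Δ ∘ₗ β) x)) = (α ∘ₗ β) x) :=
  ⟨HomCoalgebra.IsHomCoassociative.twist hcoassoc hβ,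
    HomCoalgebra.IsCounit.twist hcounit⟩
end

section
/- Let (A, Δ, ε) be a coassociative counital coalgebra and β : A → A a coalgebra morphism. Then (A, Δ∘β, β, ε) is a counital Hom-coassociative coalgebra. -/
/-! If `Δ` is coassociative and `β` commutes with `Δ`, then on either side of the
Hom-coassociativity identity for `Δ ∘ β` the factor `β ⊗ β` can be pulled out of `Δ ∘ β`;
what remains are the two sides of coassociativity of `Δ`, composed with `β ⊗ (β ⊗ β)`
resp. `(β ⊗ β) ⊗ β`, and these are matched by naturality of the associator. -/

open TensorProduct

namespace TensorProduct

variable {R A : Type*} [CommSemiring R] [AddCommMonoid A] [Module R A]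
  {Δ : A →ₗ[R] A ⊗[R] A} {β : A →ₗ[R] A}

theorem homCoassoc_comp_of_coassoc
    (hcoassoc : ∀ x : A,
      map LinearMap.id Δ (Δ x) = TensorProduct.assoc R A A A (map Δ LinearMap.id (Δ x)))
    (hβ : Δ ∘ₗ β = map β β ∘ₗ Δ) (x : A) :
    map β (Δ ∘ₗ β) ((Δ ∘ₗ β) x)
      = TensorProduct.assoc R A A A (map (Δ ∘ₗ β) β ((Δ ∘ₗ β) x)) := by
  have hleft : map β (Δ ∘ₗ β) = map β (map β β) ∘ₗ map LinearMap.id Δ := by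
    rw [hβ, ← map_comp, LinearMap.comp_id]
  have hright : map (Δ ∘ₗ β) β = map (map β β) β ∘ₗ map Δ LinearMap.id := by
    rw [hβ, ← map_comp, LinearMap.comp_id]
  simp only [hleft, hright, LinearMap.comp_apply]
  rw [hcoassoc, map_map_assoc]

end TensorProduct

theorem stmt5_general {K A : Type*} [Field K] [AddCommGroup A] [Module K A]
    (Δ : A →ₗ[K] A ⊗[K] A) (β : A →ₗ[K] A) (ε : A →ₗ[K] K)
    (hcoassoc : ∀ x : A,
      TensorProduct.map LinearMap.id Δ (Δ x)
        = TensorProduct.assoc K A A A (TensorProduct.map Δ LinearMap.id (Δ x)))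
    (hcounit : ∀ x : A,
      TensorProduct.lid K A (TensorProduct.map ε LinearMap.id (Δ x)) = x ∧
      TensorProduct.rid K A (TensorProduct.map LinearMap.id ε (Δ x)) = x)
    (hβ : ∀ x : A, TensorProduct.map β β (Δ x) = Δ (β x)) :
    (∀ x : A,
      TensorProduct.map β (Δ ∘ₗ β) ((Δ ∘ₗ β) x)
        = TensorProduct.assoc K A A A (TensorProduct.map (Δ ∘ₗ β) β ((Δ ∘ₗ β) x))) ∧
    (∀ x : A,
      TensorProduct.lid K A (TensorProduct.map ε LinearMap.id ((Δ ∘ₗ β) x)) = β x ∧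
      TensorProduct.rid K A (TensorProduct.map LinearMap.id ε ((Δ ∘ₗ β) x)) = β x) :=
  ⟨homCoassoc_comp_of_coassoc hcoassoc (LinearMap.ext fun x => (hβ x).symm),
    fun x => hcounit (β x)⟩

/-- If `(A, Δ, ε)` is a coassociative counital coalgebra and `β` a
coalgebra morphism, then `(A, Δ∘β, β, ε)` is a counital Hom-coassociative coalgebra. -/
theorem stmt5 {K A : Type*} [Field K] [AddCommGroup A] [Module K A]
    (Δ : A →ₗ[K] A ⊗[K] A) (β : A →ₗ[K] A) (ε : A →ₗ[K] K)
    (hcoassoc : ∀ x : A,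
      TensorProduct.map LinearMap.id Δ (Δ x)
        = TensorProduct.assoc K A A A (TensorProduct.map Δ LinearMap.id (Δ x)))
    (hcounit : ∀ x : A,
      TensorProduct.lid K A (TensorProduct.map ε LinearMap.id (Δ x)) = x ∧
      TensorProduct.rid K A (TensorProduct.map LinearMap.id ε (Δ x)) = x)
    (hβ : ∀ x : A, TensorProduct.map β β (Δ x) = Δ (β x))
    (hβε : ∀ x : A, ε (β x) = ε x) :
    (∀ x : A,
      TensorProduct.map β (Δ ∘ₗ β) ((Δ ∘ₗ β) x)
        = TensorProduct.assoc K A A A (TensorProduct.map (Δ ∘ₗ β) β ((Δ ∘ₗ β) x))) ∧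
    (∀ x : A,
      TensorProduct.lid K A (TensorProduct.map ε LinearMap.id ((Δ ∘ₗ β) x)) = β x ∧
      TensorProduct.rid K A (TensorProduct.map LinearMap.id ε ((Δ ∘ₗ β) x)) = β x) :=
  stmt5_general Δ β ε hcoassoc hcounit hβ
end

section
/- Let (A, μ, α, η, Δ, β, ε) be a Hom-bialgebra. Then the space Hom(A, A) of linear endomorphisms with the convolution product f ⋆ g = μ∘(f⊗g)∘Δ, unit η∘ε, and twisting map γ(f) = α∘f∘β, is a unital Hom-associative algebra: (f ⋆ g) ⋆ γ(h) = γ(f) ⋆ (g ⋆ h), and f ⋆ (η∘ε) = (η∘ε) ⋆ f = γ(f). -/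
/-!
Both identities are pointwise consequences of the algebra axioms once the coalgebra axioms
have been used to rearrange `Δ`. For associativity, `(f ⋆ g) ⋆ γ(h)` is `μ ∘ (μ ⊗ α) ∘ (f ⊗ g ⊗ h)`
applied to `(Δ ⊗ β) ∘ Δ`, and Hom-associativity of `μ` turns this into
`μ ∘ (α ⊗ μ) ∘ (f ⊗ g ⊗ h)` applied to `(β ⊗ Δ) ∘ Δ`, which is `γ(f) ⋆ (g ⋆ h)` by
Hom-coassociativity. For the unit, `x * 1 = α x` reduces `f ⋆ (η ∘ ε)` to
`α ∘ f ∘ (id ⊗ ε) ∘ Δ`, which is `α ∘ f ∘ β` by the counit axiom.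
-/

open TensorProduct

variable {K A : Type*} [Field K] [NonUnitalNonAssocRing A] [Module K A]
  [SMulCommClass K A A] [IsScalarTower K A A]

/-- The convolution product `f ⋆ g = μ∘(f⊗g)∘Δ` on `Hom(A,A)`. -/
noncomputable def convMul (Δ : A →ₗ[K] A ⊗[K] A) (f g : A →ₗ[K] A) : A →ₗ[K] A :=
  LinearMap.mul' K A ∘ₗ TensorProduct.map f g ∘ₗ Δ

namespace HomAlgebra

open LinearMap

variable {R B M N P : Type*} [CommSemiring R] [NonUnitalNonAssocSemiring B] [Module R B]
  [SMulCommClass R B B] [IsScalarTower R B B]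
  [AddCommMonoid M] [Module R M] [AddCommMonoid N] [Module R N] [AddCommMonoid P] [Module R P]

theorem mul'_comp_map_mul'_comp_map {α : B →ₗ[R] B}
    (hassoc : ∀ x y z : B, (x * y) * α z = α x * (y * z))
    (f : M →ₗ[R] B) (g : N →ₗ[R] B) (h : P →ₗ[R] B) :
    mul' R B ∘ₗ map (mul' R B ∘ₗ map f g) (α ∘ₗ h)
      = mul' R B ∘ₗ map (α ∘ₗ f) (mul' R B ∘ₗ map g h) ∘ₗ
          (TensorProduct.assoc R M N P).toLinearMap :=
  TensorProduct.ext_threefold fun x y z => by simpa using hassoc (f x) (g y) (h z)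

theorem mul'_comp_map_smulRight_right {α : B →ₗ[R] B} {one : B}
    (hunit : ∀ x : B, x * one = α x) (f : M →ₗ[R] B) (ε : N →ₗ[R] R) :
    mul' R B ∘ₗ map f (ε.smulRight one)
      = α ∘ₗ f ∘ₗ (TensorProduct.rid R M).toLinearMap ∘ₗ map id ε :=
  TensorProduct.ext' fun x y => by simp [hunit]

theorem mul'_comp_map_smulRight_left {α : B →ₗ[R] B} {one : B}
    (hunit : ∀ x : B, one * x = α x) (ε : M →ₗ[R] R) (f : N →ₗ[R] B) :
    mul' R B ∘ₗ map (ε.smulRight one) f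
      = α ∘ₗ f ∘ₗ (TensorProduct.lid R N).toLinearMap ∘ₗ map ε id :=
  TensorProduct.ext' fun x y => by simp [smul_mul_assoc, hunit]

end HomAlgebra

section Convolution

open HomAlgebra
open LinearMap (mul' comp_assoc)

variable {α β : A →ₗ[K] A} {Δ : A →ₗ[K] A ⊗[K] A}

theorem convMul_hom_assoc (hassoc : ∀ x y z : A, (x * y) * α z = α x * (y * z))
    (hcoassoc : ∀ x : A,
      map β Δ (Δ x) = TensorProduct.assoc K A A A (map Δ β (Δ x)))
    (f g h : A →ₗ[K] A) :
    convMul Δ (convMul Δ f g) (α ∘ₗ h ∘ₗ β) = convMul Δ (α ∘ₗ f ∘ₗ β) (convMul Δ g h) := by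
  have hΔ : map β Δ ∘ₗ Δ = (TensorProduct.assoc K A A A).toLinearMap ∘ₗ map Δ β ∘ₗ Δ :=
    LinearMap.ext hcoassoc
  calc convMul Δ (convMul Δ f g) (α ∘ₗ h ∘ₗ β)
      = (mul' K A ∘ₗ map (mul' K A ∘ₗ map f g) (α ∘ₗ h)) ∘ₗ map Δ β ∘ₗ Δ := by
        simp only [convMul, map_comp, comp_assoc]
    _ = mul' K A ∘ₗ map (α ∘ₗ f) (mul' K A ∘ₗ map g h) ∘ₗ map β Δ ∘ₗ Δ := by
        rw [mul'_comp_map_mul'_comp_map hassoc, hΔ]; simp only [comp_assoc]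
    _ = convMul Δ (α ∘ₗ f ∘ₗ β) (convMul Δ g h) := by
        simp only [convMul, map_comp, comp_assoc]

theorem convMul_smulRight_right {one : A} {ε : A →ₗ[K] K} (hunit : ∀ x : A, x * one = α x)
    (hcounit : ∀ x : A, TensorProduct.rid K A (map LinearMap.id ε (Δ x)) = β x) (f : A →ₗ[K] A) :
    convMul Δ f (ε.smulRight one) = α ∘ₗ f ∘ₗ β := by
  ext x
  simp only [convMul, ← comp_assoc, mul'_comp_map_smulRight_right hunit]
  simp [hcounit]

theorem convMul_smulRight_left {one : A} {ε : A →ₗ[K] K} (hunit : ∀ x : A, one * x = α x)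
    (hcounit : ∀ x : A, TensorProduct.lid K A (map ε LinearMap.id (Δ x)) = β x) (f : A →ₗ[K] A) :
    convMul Δ (ε.smulRight one) f = α ∘ₗ f ∘ₗ β := by
  ext x
  simp only [convMul, ← comp_assoc, mul'_comp_map_smulRight_left hunit]
  simp [hcounit]

end Convolution

theorem stmt10_general (α β : A →ₗ[K] A) (one : A)
    (Δ : A →ₗ[K] A ⊗[K] A) (ε : A →ₗ[K] K)
    (hassoc : ∀ x y z : A, (x * y) * α z = α x * (y * z))
    (hunit : ∀ x : A, x * one = α x ∧ one * x = α x)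
    (hcoassoc : ∀ x : A,
      TensorProduct.map β Δ (Δ x)
        = TensorProduct.assoc K A A A (TensorProduct.map Δ β (Δ x)))
    (hcounit : ∀ x : A,
      TensorProduct.lid K A (TensorProduct.map ε LinearMap.id (Δ x)) = β x ∧
      TensorProduct.rid K A (TensorProduct.map LinearMap.id ε (Δ x)) = β x) :
    (∀ f g h : A →ₗ[K] A,
      convMul Δ (convMul Δ f g) (α ∘ₗ h ∘ₗ β)
        = convMul Δ (α ∘ₗ f ∘ₗ β) (convMul Δ g h)) ∧
    (∀ f : A →ₗ[K] A,
      convMul Δ f (ε.smulRight one) = α ∘ₗ f ∘ₗ β ∧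
      convMul Δ (ε.smulRight one) f = α ∘ₗ f ∘ₗ β) :=
  ⟨convMul_hom_assoc hassoc hcoassoc, fun f =>
    ⟨convMul_smulRight_right (fun x => (hunit x).1) (fun x => (hcounit x).2) f,
      convMul_smulRight_left (fun x => (hunit x).2) (fun x => (hcounit x).1) f⟩⟩

/-- For a Hom-bialgebra `(A, μ, α, η, Δ, β, ε)`, the space
`Hom(A,A)` with the convolution product, unit `η∘ε` and twisting
`γ(f) = α∘f∘β` is a unital Hom-associative algebra. -/
theorem stmt10 (α β : A →ₗ[K] A) (one : A)
    (Δ : A →ₗ[K] A ⊗[K] A) (ε : A →ₗ[K] K)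
    (hassoc : ∀ x y z : A, (x * y) * α z = α x * (y * z))
    (hunit : ∀ x : A, x * one = α x ∧ one * x = α x)
    (hcoassoc : ∀ x : A,
      TensorProduct.map β Δ (Δ x)
        = TensorProduct.assoc K A A A (TensorProduct.map Δ β (Δ x)))
    (hcounit : ∀ x : A,
      TensorProduct.lid K A (TensorProduct.map ε LinearMap.id (Δ x)) = β x ∧
      TensorProduct.rid K A (TensorProduct.map LinearMap.id ε (Δ x)) = β x)
    (hΔone : Δ one = one ⊗ₜ[K] one)
    (hΔmul : ∀ x y : A, Δ (x * y) = Δ x * Δ y)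
    (hεone : ε one = 1)
    (hεmul : ∀ x y : A, ε (x * y) = ε x * ε y)
    (hεα : ∀ x : A, ε (α x) = ε x) :
    (∀ f g h : A →ₗ[K] A,
      convMul Δ (convMul Δ f g) (α ∘ₗ h ∘ₗ β)
        = convMul Δ (α ∘ₗ f ∘ₗ β) (convMul Δ g h)) ∧
    (∀ f : A →ₗ[K] A,
      convMul Δ f (ε.smulRight one) = α ∘ₗ f ∘ₗ β ∧
      convMul Δ (ε.smulRight one) f = α ∘ₗ f ∘ₗ β) :=
  stmt10_general α β one Δ ε hassoc hunit hcoassoc hcounit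
end

section
/- Let G be a group and α : G → G a group homomorphism, extended linearly to the group algebra KG. Define μ(e_g ⊗ e_{g'}) = e_{α(g·g')} and Δ(e_g) = e_{α(g)} ⊗ e_{α(g)}, with unit e_1 and counit ε(e_g) = 1. Then (KG, μ, η, Δ, ε, α) is a Hom-bialgebra. -/
open TensorProduct Coalgebra

/-!
`α` is the bialgebra endomorphism `K[φ]` of the group bialgebra `K[G]`, and `Δ = comul ∘ α`,
`ε = counit`: the Hom-bialgebra is the twist of `K[G]` along `α`. Each Hom-bialgebra axiom then
reduces to the corresponding bialgebra axiom of `K[G]`, because `α` commutes with the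
multiplication, the comultiplication and the counit.
-/

theorem MonoidAlgebra.linearMap_ext_single_one {R M N : Type*} [Semiring R] [AddCommMonoid N]
    [Module R N] ⦃f g : MonoidAlgebra R M →ₗ[R] N⦄
    (h : ∀ m, f (MonoidAlgebra.single m 1) = g (MonoidAlgebra.single m 1)) : f = g :=
  MonoidAlgebra.lhom_ext' fun m => LinearMap.ext_ring (h m)

section

variable {R C F : Type*} [CommSemiring R] [AddCommMonoid C] [Module R C] [Coalgebra R C]
  [FunLike F C C] [CoalgHomClass F R C C] (f : F)

def twistComul : C →ₗ[R] C ⊗[R] C := comul ∘ₗ (f : C →ₗ[R] C)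

theorem twistComul_apply (x : C) : twistComul f x = comul (f x) := rfl

/-- Both sides equal `(id ⊗ Δ) Δ (f (f x))`. -/
theorem twistComul_coassoc (x : C) :
    map (f : C →ₗ[R] C) (twistComul f) (twistComul f x)
      = TensorProduct.assoc R C C C (map (twistComul f) (f : C →ₗ[R] C) (twistComul f x)) := by
  have hl : map (f : C →ₗ[R] C) (twistComul f)
      = comul.lTensor C ∘ₗ map (f : C →ₗ[R] C) (f : C →ₗ[R] C) := by
    rw [twistComul, LinearMap.lTensor_comp_map]
  have hr : map (twistComul f) (f : C →ₗ[R] C)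
      = comul.rTensor C ∘ₗ map (f : C →ₗ[R] C) (f : C →ₗ[R] C) := by
    rw [twistComul, LinearMap.rTensor_comp_map]
  rw [hl, hr, LinearMap.comp_apply, LinearMap.comp_apply, twistComul_apply,
    CoalgHomClass.map_comp_comul_apply, coassoc_apply]

theorem lid_map_counit_twistComul (x : C) :
    TensorProduct.lid R C (map counit LinearMap.id (twistComul f x)) = f x := by
  simp [twistComul_apply, ← LinearMap.rTensor_def, rTensor_counit_comul]

theorem rid_map_counit_twistComul (x : C) :
    TensorProduct.rid R C (map LinearMap.id counit (twistComul f x)) = f x := by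
  simp [twistComul_apply, ← LinearMap.lTensor_def, lTensor_counit_comul]

end

section

variable {R C F : Type*} [CommSemiring R] [Semiring C] [Bialgebra R C] [FunLike F C C]
  [BialgHomClass F R C C] (f : F)

theorem twistComul_one : twistComul f 1 = 1 := by
  rw [twistComul_apply, map_one, Bialgebra.comul_one]

theorem twistComul_map_mul (x y : C) :
    twistComul f (f (x * y))
      = map (f : C →ₗ[R] C) (f : C →ₗ[R] C) (twistComul f x * twistComul f y) := by
  rw [twistComul_apply, twistComul_apply, twistComul_apply, ← CoalgHomClass.map_comp_comul_apply,
    map_mul, Bialgebra.comul_mul]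

end

/-- For a group `G` and a group homomorphism `φ : G → G`, the
group algebra `KG` with `μ(e_g ⊗ e_g') = e_{φ(g·g')}`, `Δ(e_g) = e_{φ g} ⊗ e_{φ g}`,
unit `e_1` and counit `ε(e_g) = 1`, is a Hom-bialgebra (where `α` is the linear
extension of `φ`). -/
theorem stmt12 {K G : Type*} [Field K] [Group G] (φ : G →* G)
    (α : MonoidAlgebra K G →ₗ[K] MonoidAlgebra K G)
    (hα : ∀ g : G, α (MonoidAlgebra.single g 1) = MonoidAlgebra.single (φ g) 1)
    (Δ : MonoidAlgebra K G →ₗ[K] MonoidAlgebra K G ⊗[K] MonoidAlgebra K G)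
    (hΔ : ∀ g : G, Δ (MonoidAlgebra.single g 1)
      = MonoidAlgebra.single (φ g) (1:K) ⊗ₜ[K] MonoidAlgebra.single (φ g) (1:K))
    (ε : MonoidAlgebra K G →ₗ[K] K)
    (hε : ∀ g : G, ε (MonoidAlgebra.single g 1) = 1) :
    -- Hom-associativity of μ(x,y) = α(x·y)
    (∀ x y z : MonoidAlgebra K G, α (α (x * y) * α z) = α (α x * α (y * z))) ∧
    -- unit e_1 = 1
    (∀ x : MonoidAlgebra K G, α (x * 1) = α x ∧ α (1 * x) = α x) ∧
    -- Hom-coassociativity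
    (∀ x : MonoidAlgebra K G,
      TensorProduct.map α Δ (Δ x)
        = TensorProduct.assoc K _ _ _ (TensorProduct.map Δ α (Δ x))) ∧
    -- counit
    (∀ x : MonoidAlgebra K G,
      TensorProduct.lid K _ (TensorProduct.map ε LinearMap.id (Δ x)) = α x ∧
      TensorProduct.rid K _ (TensorProduct.map LinearMap.id ε (Δ x)) = α x) ∧
    -- compatibility of Δ and ε with μ and the unit
    (Δ 1 = 1 ⊗ₜ[K] 1) ∧
    (∀ x y : MonoidAlgebra K G,
      Δ (α (x * y)) = TensorProduct.map α α (Δ x * Δ y)) ∧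
    (ε 1 = 1) ∧
    (∀ x y : MonoidAlgebra K G, ε (α (x * y)) = ε x * ε y) ∧
    (∀ x : MonoidAlgebra K G, ε (α x) = ε x) := by
  set f := MonoidAlgebra.mapDomainBialgHom K φ
  obtain rfl : α = f := MonoidAlgebra.linearMap_ext_single_one fun g => by simp [hα, f]
  obtain rfl : Δ = twistComul f := MonoidAlgebra.linearMap_ext_single_one fun g => by
    simp [hΔ, twistComul_apply, f]
  obtain rfl : ε = counit := MonoidAlgebra.linearMap_ext_single_one fun g => by simp [hε]
  refine ⟨fun x y z => by simp only [LinearMap.coe_coe, map_mul, mul_assoc],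
    fun x => by simp, twistComul_coassoc f,
    fun x => ⟨lid_map_counit_twistComul f x, rid_map_counit_twistComul f x⟩,
    twistComul_one f, twistComul_map_mul f, Bialgebra.counit_one,
    fun x y => ?_, CoalgHomClass.counit_comp_apply f⟩
  rw [LinearMap.coe_coe, CoalgHomClass.counit_comp_apply, Bialgebra.counit_mul]
end

section
/- Let (A, μ, η, Δ, ε, α, Φ) be a Hom-quasi-bialgebra and β : A → A a HQ-bialgebra morphism (β∘μ = μ∘(β⊗β), β(1)=1, (β⊗β)∘Δ = Δ∘β, ε∘β = ε, β∘α = α∘β, β⊗³(Φ) = Φ). Then (A, μ_β = β∘μ, η, Δ_β = Δ∘β, ε, β∘α, Φ) is a Hom-quasi-bialgebra; in particular the quasi-coassociativity identity (βα ⊗ Δ_β)(Δ_β(x))·Φ = Φ·(Δ_β ⊗ βα)(Δ_β(x)) holds for all x ∈ A. -/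
/-!
Since `β` is multiplicative, so are its tensor powers `β^{⊗k}`, and each `β`-twisted product
on `A^{⊗k}` is `β^{⊗k}` applied to the untwisted one. As `β` commutes with `α` and `Δ` and fixes
`Φ` and `1`, every twisted structure map sends `Φ` (resp. `Δ_β x`) to what the original one sends
`Φ` (resp. `Δ (β² x)`) to. Hence each axiom of the twisted structure is the image under `β^{⊗k}`
of the corresponding axiom of `A`.
-/

open TensorProduct

variable {K A : Type*} [Field K] [NonUnitalNonAssocRing A] [Module K A]
  [SMulCommClass K A A] [IsScalarTower K A A]

/-- The twisted componentwise multiplication on `A ⊗ A`: the bilinear extension of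
`(a⊗b)·(c⊗d) = m(ac) ⊗ m(bd)`, where the multiplication on `A` under consideration
is `x·y = m(x*y)` (`m = id` recovers the original multiplication `*`). -/
noncomputable def mul2 (m : A →ₗ[K] A) (u v : A ⊗[K] A) : A ⊗[K] A :=
  TensorProduct.map m m (u * v)

/-- The twisted componentwise multiplication on `A ⊗ A ⊗ A`. -/
noncomputable def mul3 (m : A →ₗ[K] A) (u v : A ⊗[K] (A ⊗[K] A)) : A ⊗[K] (A ⊗[K] A) :=
  TensorProduct.map m (TensorProduct.map m m) (u * v)

/-- The twisted componentwise multiplication on `A ⊗ A ⊗ A ⊗ A`. -/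
noncomputable def mul4 (m : A →ₗ[K] A) (u v : A ⊗[K] (A ⊗[K] (A ⊗[K] A))) :
    A ⊗[K] (A ⊗[K] (A ⊗[K] A)) :=
  TensorProduct.map m (TensorProduct.map m (TensorProduct.map m m)) (u * v)

/-- A Hom-quasi-bialgebra structure on `A`, whose multiplication is
`μ(x,y) = m (x * y)` (a twist of the reference bilinear multiplication `*` of `A`
by a linear map `m`; taking `m = id` gives an arbitrary HQ-bialgebra, taking
`m = β` gives the `β`-twisted multiplication `μ_β = β∘μ`). -/
structure IsHomQuasiBialgebra (m : A →ₗ[K] A) (one : A) (α : A →ₗ[K] A)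
    (Δ : A →ₗ[K] A ⊗[K] A) (ε : A →ₗ[K] K) (Φ : A ⊗[K] (A ⊗[K] A)) : Prop where
  /-- Hom-associativity `μ(μ(x,y), α z) = μ(α x, μ(y,z))` -/
  hom_assoc : ∀ x y z : A, m (m (x * y) * α z) = m (α x * m (y * z))
  /-- unitality `μ(x, 1) = α x` -/
  unit_right : ∀ x : A, m (x * one) = α x
  /-- unitality `μ(1, x) = α x` -/
  unit_left : ∀ x : A, m (one * x) = α x
  /-- `Δ` is an algebra morphism -/
  Δ_mul : ∀ x y : A, Δ (m (x * y)) = mul2 m (Δ x) (Δ y)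
  /-- `Δ` commutes with `α` -/
  Δ_α : ∀ x : A, Δ (α x) = TensorProduct.map α α (Δ x)
  /-- `ε` is an algebra morphism -/
  ε_mul : ∀ x y : A, ε (m (x * y)) = ε x * ε y
  /-- `ε∘α = ε` -/
  ε_α : ∀ x : A, ε (α x) = ε x
  /-- `α⊗³(Φ) = Φ` -/
  Φ_α : TensorProduct.map α (TensorProduct.map α α) Φ = Φ
  /-- `Φ` is invertible -/
  Φ_inv : ∃ Φ' : A ⊗[K] (A ⊗[K] A),
    mul3 m Φ Φ' = one ⊗ₜ[K] (one ⊗ₜ[K] one) ∧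
    mul3 m Φ' Φ = one ⊗ₜ[K] (one ⊗ₜ[K] one)
  /-- quasi-coassociativity `(α⊗Δ)(Δ x)·Φ = Φ·(Δ⊗α)(Δ x)` -/
  quasi_coassoc : ∀ x : A,
    mul3 m (TensorProduct.map α Δ (Δ x)) Φ
      = mul3 m Φ (TensorProduct.assoc K A A A (TensorProduct.map Δ α (Δ x)))
  /-- counit `(ε⊗id)∘Δ = α` -/
  counit_left : ∀ x : A,
    TensorProduct.lid K A (TensorProduct.map ε LinearMap.id (Δ x)) = α x
  /-- counit `(id⊗ε)∘Δ = α` -/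
  counit_right : ∀ x : A,
    TensorProduct.rid K A (TensorProduct.map LinearMap.id ε (Δ x)) = α x
  /-- the pentagon (3-cocycle) identity
  `(α⊗α⊗Δ)(Φ)·(Δ⊗α⊗α)(Φ) = Φ₂₃₄·((α⊗Δ⊗α)(Φ)·Φ₁₂₃)` -/
  pentagon :
    mul4 m (TensorProduct.map α (TensorProduct.map α Δ) Φ)
        (TensorProduct.assoc K A A (A ⊗[K] A)
          (TensorProduct.map Δ (TensorProduct.map α α) Φ))
      = mul4 m (one ⊗ₜ[K] Φ)
          (mul4 m
            (TensorProduct.map LinearMap.id (TensorProduct.assoc K A A A).toLinearMap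
              (TensorProduct.map α (TensorProduct.map Δ α) Φ))
            (TensorProduct.map LinearMap.id (TensorProduct.assoc K A A A).toLinearMap
              (TensorProduct.assoc K A (A ⊗[K] A) A (Φ ⊗ₜ[K] one))))
  /-- `(id⊗ε⊗id)(Φ) = 1⊗1` -/
  ε_mid :
    TensorProduct.map LinearMap.id
        ((TensorProduct.lid K A).toLinearMap ∘ₗ TensorProduct.map ε LinearMap.id) Φ
      = one ⊗ₜ[K] one

theorem TensorProduct.map_mul_of_map_mul {R M N : Type*} [CommSemiring R]
    [NonUnitalNonAssocSemiring M] [NonUnitalNonAssocSemiring N]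
    [Module R M] [Module R N] [SMulCommClass R M M] [IsScalarTower R M M]
    [SMulCommClass R N N] [IsScalarTower R N N] (f : M →ₗ[R] M) (g : N →ₗ[R] N)
    (hf : ∀ a b, f (a * b) = f a * f b) (hg : ∀ a b, g (a * b) = g a * g b)
    (u v : M ⊗[R] N) : map f g (u * v) = map f g u * map f g v := by
  induction u using TensorProduct.induction_on with
  | zero => simp
  | add u₁ u₂ h₁ h₂ => simp only [add_mul, map_add, h₁, h₂]
  | tmul a b =>
    induction v using TensorProduct.induction_on with
    | zero => simp
    | add v₁ v₂ h₁ h₂ => simp only [mul_add, map_add, h₁, h₂]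
    | tmul c d => simp only [Algebra.TensorProduct.tmul_mul_tmul, map_tmul, hf, hg]

theorem TensorProduct.map_map_comp_apply_of_map_map_apply_eq_self {R M N P M' N' P' : Type*}
    [CommSemiring R] [AddCommMonoid M] [AddCommMonoid N] [AddCommMonoid P]
    [AddCommMonoid M'] [AddCommMonoid N'] [AddCommMonoid P']
    [Module R M] [Module R N] [Module R P] [Module R M'] [Module R N'] [Module R P']
    {f : M →ₗ[R] M} {g : N →ₗ[R] N} {h : P →ₗ[R] P}
    (f' : M →ₗ[R] M') (g' : N →ₗ[R] N') (h' : P →ₗ[R] P') {x : M ⊗[R] (N ⊗[R] P)}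
    (hx : map f (map g h) x = x) :
    map (f' ∘ₗ f) (map (g' ∘ₗ g) (h' ∘ₗ h)) x = map f' (map g' h') x := by
  rw [map_comp, map_comp, LinearMap.comp_apply, hx]

theorem TensorProduct.map_map_map_map_id_assoc {R M N P Q M' N' P' Q' : Type*}
    [CommSemiring R] [AddCommMonoid M] [AddCommMonoid N] [AddCommMonoid P] [AddCommMonoid Q]
    [AddCommMonoid M'] [AddCommMonoid N'] [AddCommMonoid P'] [AddCommMonoid Q']
    [Module R M] [Module R N] [Module R P] [Module R Q]
    [Module R M'] [Module R N'] [Module R P'] [Module R Q']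
    (f : M →ₗ[R] M') (g : N →ₗ[R] N') (h : P →ₗ[R] P') (k : Q →ₗ[R] Q')
    (x : M ⊗[R] ((N ⊗[R] P) ⊗[R] Q)) :
    map f (map g (map h k)) (map LinearMap.id (TensorProduct.assoc R N P Q).toLinearMap x)
      = map LinearMap.id (TensorProduct.assoc R N' P' Q').toLinearMap
          (map f (map (map g h) k) x) := by
  rw [← LinearMap.comp_apply, ← LinearMap.comp_apply, ← map_comp, ← map_comp,
    map_map_comp_assoc_eq, LinearMap.comp_id, LinearMap.id_comp]

@[simp]
theorem mul2_id (u v : A ⊗[K] A) : mul2 LinearMap.id u v = u * v := by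
  simp [mul2]

@[simp]
theorem mul3_id (u v : A ⊗[K] (A ⊗[K] A)) : mul3 LinearMap.id u v = u * v := by
  simp [mul3]

@[simp]
theorem mul4_id (u v : A ⊗[K] (A ⊗[K] (A ⊗[K] A))) : mul4 LinearMap.id u v = u * v := by
  simp [mul4]

namespace IsHomQuasiBialgebra

variable {one : A} {α β : A →ₗ[K] A} {Δ : A →ₗ[K] A ⊗[K] A} {ε : A →ₗ[K] K}
  {Φ : A ⊗[K] (A ⊗[K] A)}

theorem quasi_coassoc_twist (hA : IsHomQuasiBialgebra LinearMap.id one α Δ ε Φ)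
    (hβ_Δ : ∀ x : A, map β β (Δ x) = Δ (β x)) (hβ_α : ∀ x : A, β (α x) = α (β x)) (x : A) :
    mul3 β (map (β ∘ₗ α) (Δ ∘ₗ β) ((Δ ∘ₗ β) x)) Φ
      = mul3 β Φ (TensorProduct.assoc K A A A (map (Δ ∘ₗ β) (β ∘ₗ α) ((Δ ∘ₗ β) x))) := by
  have h := hA.quasi_coassoc (β (β x))
  rw [mul3_id, mul3_id] at h
  have hβα : β ∘ₗ α = α ∘ₗ β := LinearMap.ext hβ_α
  rw [hβα, map_comp, map_comp]
  simp only [mul3, LinearMap.comp_apply, hβ_Δ, h]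

theorem pentagon_twist (hA : IsHomQuasiBialgebra LinearMap.id one α Δ ε Φ)
    (hβ_mul : ∀ x y : A, β (x * y) = β x * β y) (hβ_one : β one = one)
    (hβ_Δ : ∀ x : A, map β β (Δ x) = Δ (β x)) (hβ_α : ∀ x : A, β (α x) = α (β x))
    (hβ_Φ : map β (map β β) Φ = Φ) :
    mul4 β (map (β ∘ₗ α) (map (β ∘ₗ α) (Δ ∘ₗ β)) Φ)
        (TensorProduct.assoc K A A (A ⊗[K] A) (map (Δ ∘ₗ β) (map (β ∘ₗ α) (β ∘ₗ α)) Φ))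
      = mul4 β (one ⊗ₜ[K] Φ)
          (mul4 β
            (map LinearMap.id (TensorProduct.assoc K A A A).toLinearMap
              (map (β ∘ₗ α) (map (Δ ∘ₗ β) (β ∘ₗ α)) Φ))
            (map LinearMap.id (TensorProduct.assoc K A A A).toLinearMap
              (TensorProduct.assoc K A (A ⊗[K] A) A (Φ ⊗ₜ[K] one)))) := by
  have hβ₄ := map_mul_of_map_mul β _ hβ_mul <| map_mul_of_map_mul β _ hβ_mul <|
    map_mul_of_map_mul β β hβ_mul hβ_mul
  have hβα : β ∘ₗ α = α ∘ₗ β := LinearMap.ext hβ_α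
  have hβΔ : map β β ∘ₗ Δ = Δ ∘ₗ β := LinearMap.ext hβ_Δ
  rw [hβα]
  simp only [map_map_comp_apply_of_map_map_apply_eq_self _ _ _ hβ_Φ]
  set W := map LinearMap.id (TensorProduct.assoc K A A A).toLinearMap (map α (map Δ α) Φ)
    with hW
  set X := map LinearMap.id (TensorProduct.assoc K A A A).toLinearMap
    (TensorProduct.assoc K A (A ⊗[K] A) A (Φ ⊗ₜ[K] one)) with hX
  have fix_W : map β (map β (map β β)) W = W := by
    rw [hW, map_map_map_map_id_assoc, ← LinearMap.comp_apply (map β _), ← map_comp, ← map_comp,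
      hβα, hβΔ, map_map_comp_apply_of_map_map_apply_eq_self _ _ _ hβ_Φ]
  have fix_X : map β (map β (map β β)) X = X := by
    rw [hX, map_map_map_map_id_assoc, map_map_assoc, map_tmul, hβ_Φ, hβ_one]
  have h := hA.pentagon
  rw [mul4_id, mul4_id, mul4_id] at h
  rw [show mul4 β W X = W * X by rw [mul4, hβ₄, fix_W, fix_X], mul4, mul4, h]

end IsHomQuasiBialgebra

/-- If `(A, μ, η, Δ, ε, α, Φ)` is a Hom-quasi-bialgebra and
`β : A → A` is a HQ-bialgebra morphism, then
`(A, μ_β = β∘μ, η, Δ_β = Δ∘β, ε, β∘α, Φ)` is a Hom-quasi-bialgebra (in particular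
the quasi-coassociativity identity
`(βα ⊗ Δ_β)(Δ_β(x))·Φ = Φ·(Δ_β ⊗ βα)(Δ_β(x))` holds for all `x`). -/
theorem stmt13 (one : A) (α : A →ₗ[K] A) (Δ : A →ₗ[K] A ⊗[K] A)
    (ε : A →ₗ[K] K) (Φ : A ⊗[K] (A ⊗[K] A))
    (hA : IsHomQuasiBialgebra (LinearMap.id : A →ₗ[K] A) one α Δ ε Φ)
    (β : A →ₗ[K] A)
    (hβ_mul : ∀ x y : A, β (x * y) = β x * β y)
    (hβ_one : β one = one)
    (hβ_Δ : ∀ x : A, TensorProduct.map β β (Δ x) = Δ (β x))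
    (hβ_ε : ∀ x : A, ε (β x) = ε x)
    (hβ_α : ∀ x : A, β (α x) = α (β x))
    (hβ_Φ : TensorProduct.map β (TensorProduct.map β β) Φ = Φ) :
    IsHomQuasiBialgebra β one (β ∘ₗ α) (Δ ∘ₗ β) ε Φ := by
  have hβα : β ∘ₗ α = α ∘ₗ β := LinearMap.ext hβ_α
  have hβ₂ := map_mul_of_map_mul β β hβ_mul hβ_mul
  obtain ⟨Φ', hΦΦ', hΦ'Φ⟩ := hA.Φ_inv
  rw [mul3_id] at hΦΦ' hΦ'Φ
  exact
    { hom_assoc := fun x y z => by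
        simp only [LinearMap.comp_apply, ← hβ_mul]
        exact congrArg (β ∘ β) (hA.hom_assoc x y z)
      unit_right := fun x => congrArg β (hA.unit_right x)
      unit_left := fun x => congrArg β (hA.unit_left x)
      Δ_mul := fun x y => by
        simp only [LinearMap.comp_apply, mul2, hβ_mul, hβ₂, hβ_Δ]
        rw [← mul2_id]
        exact hA.Δ_mul _ _
      Δ_α := fun x => by
        rw [LinearMap.comp_apply, LinearMap.comp_apply, hβ_α, ← hβ_Δ, hA.Δ_α,
          ← LinearMap.comp_apply (map β β), ← map_comp]
        rfl
      ε_mul := fun x y => (hβ_ε _).trans (hA.ε_mul x y)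
      ε_α := fun x => (hβ_ε _).trans (hA.ε_α x)
      Φ_α := by
        rw [hβα, map_map_comp_apply_of_map_map_apply_eq_self _ _ _ hβ_Φ, hA.Φ_α]
      Φ_inv := ⟨Φ', by simp [mul3, hΦΦ', hβ_one], by simp [mul3, hΦ'Φ, hβ_one]⟩
      quasi_coassoc := hA.quasi_coassoc_twist hβ_Δ hβ_α
      counit_left := fun x => (hA.counit_left (β x)).trans (hβ_α x).symm
      counit_right := fun x => (hA.counit_right (β x)).trans (hβ_α x).symm
      pentagon := hA.pentagon_twist hβ_mul hβ_one hβ_Δ hβ_α hβ_Φ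
      ε_mid := hA.ε_mid }
end

section
/- Let (A, μ, η, Δ, ε, α, Φ) be a multiplicative Hom-quasi-bialgebra. Then for every nonnegative integer n, (A, αⁿ∘μ, η, Δ∘αⁿ, ε, α^{n+1}, Φ) is a Hom-quasi-bialgebra. -/
open TensorProduct

variable {K A : Type*} [Field K] [NonUnitalNonAssocRing A] [Module K A]
  [SMulCommClass K A A] [IsScalarTower K A A]


private lemma map_apply_map {R M N P Q S T : Type*} [CommSemiring R]
    [AddCommMonoid M] [AddCommMonoid N] [AddCommMonoid P] [AddCommMonoid Q]
    [AddCommMonoid S] [AddCommMonoid T]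
    [Module R M] [Module R N] [Module R P] [Module R Q] [Module R S] [Module R T]
    (f : P →ₗ[R] S) (g : Q →ₗ[R] T) (f' : M →ₗ[R] P) (g' : N →ₗ[R] Q) (z : M ⊗[R] N) :
    TensorProduct.map f g (TensorProduct.map f' g' z)
      = TensorProduct.map (f ∘ₗ f') (g ∘ₗ g') z := by
  rw [TensorProduct.map_comp]; rfl

private lemma tmap_mul {R M N P Q : Type*} [CommSemiring R]
    [NonUnitalNonAssocSemiring M] [NonUnitalNonAssocSemiring N]
    [NonUnitalNonAssocSemiring P] [NonUnitalNonAssocSemiring Q]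
    [Module R M] [Module R N] [Module R P] [Module R Q]
    [SMulCommClass R M M] [IsScalarTower R M M]
    [SMulCommClass R N N] [IsScalarTower R N N]
    [SMulCommClass R P P] [IsScalarTower R P P]
    [SMulCommClass R Q Q] [IsScalarTower R Q Q]
    (f : M →ₗ[R] P) (g : N →ₗ[R] Q)
    (hf : ∀ a b, f (a * b) = f a * f b) (hg : ∀ a b, g (a * b) = g a * g b)
    (u v : M ⊗[R] N) :
    TensorProduct.map f g (u * v) = TensorProduct.map f g u * TensorProduct.map f g v := by
  induction u using TensorProduct.induction_on with
  | zero => simp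
  | tmul a b =>
    induction v using TensorProduct.induction_on with
    | zero => simp
    | tmul c d => simp [Algebra.TensorProduct.tmul_mul_tmul, hf, hg]
    | add x y hx hy => simp only [mul_add, map_add, hx, hy]
  | add x y hx hy => simp only [add_mul, map_add, hx, hy]

/-- A multiplicative Hom-quasi-bialgebra
`(A, μ, η, Δ, ε, α, Φ)` yields, for every `n : ℕ`, a Hom-quasi-bialgebra
`(A, αⁿ∘μ, η, Δ∘αⁿ, ε, α^(n+1), Φ)`. -/
theorem stmt14 (one : A) (α : A →ₗ[K] A) (Δ : A →ₗ[K] A ⊗[K] A)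
    (ε : A →ₗ[K] K) (Φ : A ⊗[K] (A ⊗[K] A))
    (hA : IsHomQuasiBialgebra (LinearMap.id : A →ₗ[K] A) one α Δ ε Φ)
    -- multiplicativity (so that `α` is itself a HQ-bialgebra morphism):
    (hα_mul : ∀ x y : A, α (x * y) = α x * α y)
    (hα_one : α one = one) :
    ∀ n : ℕ,
      IsHomQuasiBialgebra ((α ^ n : A →ₗ[K] A)) one ((α ^ (n + 1) : A →ₗ[K] A))
        (Δ ∘ₗ (α ^ n : A →ₗ[K] A)) ε Φ := by
  intro n
  -- simplified facts from `hA` (the case `m = id`)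
  have ha : ∀ x y z : A, (x * y) * α z = α x * (y * z) := by
    have := hA.hom_assoc; simpa using this
  have hur : ∀ x : A, x * one = α x := by have := hA.unit_right; simpa using this
  have hul : ∀ x : A, one * x = α x := by have := hA.unit_left; simpa using this
  have hΔm : ∀ x y : A, Δ (x * y) = Δ x * Δ y := by
    have := hA.Δ_mul; simpa [mul2, TensorProduct.map_id] using this
  have hεm : ∀ x y : A, ε (x * y) = ε x * ε y := by
    have := hA.ε_mul; simpa using this
  have hqc : ∀ x : A,
      TensorProduct.map α Δ (Δ x) * Φ
        = Φ * TensorProduct.assoc K A A A (TensorProduct.map Δ α (Δ x)) := by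
    have := hA.quasi_coassoc; simpa [mul3, TensorProduct.map_id] using this
  have hpent :
      TensorProduct.map α (TensorProduct.map α Δ) Φ
          * TensorProduct.assoc K A A (A ⊗[K] A)
              (TensorProduct.map Δ (TensorProduct.map α α) Φ)
        = (one ⊗ₜ[K] Φ)
            * ((TensorProduct.map LinearMap.id (TensorProduct.assoc K A A A).toLinearMap
                  (TensorProduct.map α (TensorProduct.map Δ α) Φ))
               * (TensorProduct.map LinearMap.id (TensorProduct.assoc K A A A).toLinearMap
                  (TensorProduct.assoc K A (A ⊗[K] A) A (Φ ⊗ₜ[K] one)))) := by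
    have := hA.pentagon; simpa [mul4, TensorProduct.map_id] using this
  -- facts about powers of α
  have hTone : ∀ k : ℕ, (α ^ k) one = one := by
    intro k; induction k with
    | zero => rfl
    | succ k ih => rw [pow_succ, Module.End.mul_apply, hα_one, ih]
  have hTmul : ∀ (k : ℕ) (x y : A), (α ^ k) (x * y) = (α ^ k) x * (α ^ k) y := by
    intro k; induction k with
    | zero => intro x y; rfl
    | succ k ih =>
      intro x y
      rw [pow_succ, Module.End.mul_apply, hα_mul, ih, Module.End.mul_apply, Module.End.mul_apply]
  have hTε : ∀ (k : ℕ) (x : A), ε ((α ^ k) x) = ε x := by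
    intro k; induction k with
    | zero => intro x; rfl
    | succ k ih => intro x; rw [pow_succ, Module.End.mul_apply, ih, hA.ε_α]
  have hTΔ : ∀ (k : ℕ) (x : A),
      Δ ((α ^ k) x) = TensorProduct.map (α ^ k) (α ^ k) (Δ x) := by
    intro k; induction k with
    | zero => intro x; simp [TensorProduct.map_id]
    | succ k ih =>
      intro x
      rw [pow_succ, Module.End.mul_apply, ih, hA.Δ_α, map_apply_map,
        ← Module.End.mul_eq_comp, ← pow_succ]
  have hcomp : ∀ k : ℕ, ((α ^ k : A →ₗ[K] A) ∘ₗ α) = α ^ (k + 1) := by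
    intro k; rw [← Module.End.mul_eq_comp, ← pow_succ]
  have hTΦ : ∀ k : ℕ,
      TensorProduct.map (α ^ k) (TensorProduct.map (α ^ k) (α ^ k)) Φ = Φ := by
    intro k; induction k with
    | zero => simp [TensorProduct.map_id]
    | succ k ih =>
      calc TensorProduct.map (α ^ (k + 1))
            (TensorProduct.map (α ^ (k + 1)) (α ^ (k + 1))) Φ
          = TensorProduct.map (α ^ k) (TensorProduct.map (α ^ k) (α ^ k))
              (TensorProduct.map α (TensorProduct.map α α) Φ) := by
            rw [map_apply_map, ← TensorProduct.map_comp, hcomp]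
        _ = Φ := by rw [hA.Φ_α, ih]
  have hβf : (α ^ (n + 1) : A →ₗ[K] A) = α ∘ₗ (α ^ n) := by
    rw [pow_succ', Module.End.mul_eq_comp]
  have hβf' : (α ^ (n + 1) : A →ₗ[K] A) = (α ^ n) ∘ₗ α := by
    rw [pow_succ, Module.End.mul_eq_comp]
  have hΔTf : (TensorProduct.map (α ^ n) (α ^ n)) ∘ₗ Δ = Δ ∘ₗ (α ^ n : A →ₗ[K] A) := by
    refine LinearMap.ext fun z => ?_
    simp [LinearMap.comp_apply, hTΔ n]
  have hTαf : ((α ^ n : A →ₗ[K] A) ∘ₗ α) = α ∘ₗ (α ^ n) := by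
    rw [hcomp, hβf]
  -- multiplicativity of tensor powers of `α ^ n`
  have m2 := tmap_mul (R := K) (α ^ n) (α ^ n) (hTmul n) (hTmul n)
  have m3 := tmap_mul (R := K) (α ^ n) (TensorProduct.map (α ^ n) (α ^ n)) (hTmul n) m2
  have m4 := tmap_mul (R := K) (α ^ n)
    (TensorProduct.map (α ^ n) (TensorProduct.map (α ^ n) (α ^ n))) (hTmul n) m3
  constructor
  · -- hom_assoc
    intro x y z
    rw [show (α ^ (n + 1)) z = (α ^ n) (α z) by rw [pow_succ, Module.End.mul_apply],
      show (α ^ (n + 1)) x = (α ^ n) (α x) by rw [pow_succ, Module.End.mul_apply],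
      ← hTmul n, ← hTmul n, ha]
  · -- unit_right
    intro x
    rw [hur, pow_succ, Module.End.mul_apply]
  · -- unit_left
    intro x
    rw [hul, pow_succ, Module.End.mul_apply]
  · -- Δ_mul
    intro x y
    simp only [LinearMap.comp_apply, mul2, hTΔ n, hΔm]
    rw [tmap_mul (R := K) (α ^ n) (α ^ n) (hTmul n) (hTmul n) (Δ x) (Δ y)]
  · -- Δ_α
    intro x
    have h1 : (Δ ∘ₗ (α ^ n)) ((α ^ (n + 1)) x) = Δ ((α ^ (n + 1)) ((α ^ n) x)) := by
      simp only [LinearMap.comp_apply]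
      congr 1
      rw [← Module.End.mul_apply, ← Module.End.mul_apply, ← pow_add, ← pow_add, Nat.add_comm]
    rw [h1, hTΔ (n + 1)]
    simp [LinearMap.comp_apply]
  · -- ε_mul
    intro x y
    rw [hTε n, hεm]
  · -- ε_α
    intro x
    exact hTε (n + 1) x
  · -- Φ_α
    exact hTΦ (n + 1)
  · -- Φ_inv
    obtain ⟨Φ', h1, h2⟩ := hA.Φ_inv
    simp only [mul3, TensorProduct.map_id, LinearMap.id_coe, id_eq] at h1 h2
    refine ⟨Φ', ?_, ?_⟩
    · simp [mul3, h1, hTone n]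
    · simp [mul3, h2, hTone n]
  · -- quasi_coassoc
    intro x
    have e1 : TensorProduct.map (α ^ (n + 1)) (Δ ∘ₗ (α ^ n)) (Δ ((α ^ n) x))
        = TensorProduct.map α Δ (Δ ((α ^ n) ((α ^ n) x))) := by
      rw [hβf, TensorProduct.map_comp, LinearMap.comp_apply, ← hTΔ n]
    have e2 : TensorProduct.map (Δ ∘ₗ (α ^ n)) (α ^ (n + 1)) (Δ ((α ^ n) x))
        = TensorProduct.map Δ α (Δ ((α ^ n) ((α ^ n) x))) := by
      rw [hβf, TensorProduct.map_comp, LinearMap.comp_apply, ← hTΔ n]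
    simp only [mul3, LinearMap.comp_apply]
    rw [e1, e2, hqc ((α ^ n) ((α ^ n) x))]
  · -- counit_left
    intro x
    simp only [LinearMap.comp_apply]
    rw [hA.counit_left, hβf, LinearMap.comp_apply]
  · -- counit_right
    intro x
    simp only [LinearMap.comp_apply]
    rw [hA.counit_right, hβf, LinearMap.comp_apply]
  · -- pentagon
    have ha1 : TensorProduct.map (α ^ (n + 1))
          (TensorProduct.map (α ^ (n + 1)) (Δ ∘ₗ (α ^ n))) Φ
        = TensorProduct.map α (TensorProduct.map α Δ) Φ := by
      rw [hβf, TensorProduct.map_comp, TensorProduct.map_comp, LinearMap.comp_apply, hTΦ n]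
    have ha2 : TensorProduct.map (Δ ∘ₗ (α ^ n))
          (TensorProduct.map (α ^ (n + 1)) (α ^ (n + 1))) Φ
        = TensorProduct.map Δ (TensorProduct.map α α) Φ := by
      rw [hβf, TensorProduct.map_comp, TensorProduct.map_comp, LinearMap.comp_apply, hTΦ n]
    have ha3 : TensorProduct.map (α ^ (n + 1))
          (TensorProduct.map (Δ ∘ₗ (α ^ n)) (α ^ (n + 1))) Φ
        = TensorProduct.map α (TensorProduct.map Δ α) Φ := by
      rw [hβf, TensorProduct.map_comp, TensorProduct.map_comp, LinearMap.comp_apply, hTΦ n]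
    have hFmapassoc : ∀ w : A ⊗[K] ((A ⊗[K] A) ⊗[K] A),
        TensorProduct.map (α ^ n)
            (TensorProduct.map (α ^ n) (TensorProduct.map (α ^ n) (α ^ n)))
            (TensorProduct.map LinearMap.id (TensorProduct.assoc K A A A).toLinearMap w)
          = TensorProduct.map LinearMap.id (TensorProduct.assoc K A A A).toLinearMap
              (TensorProduct.map (α ^ n)
                (TensorProduct.map (TensorProduct.map (α ^ n) (α ^ n)) (α ^ n)) w) := by
      intro w
      rw [map_apply_map, map_apply_map, LinearMap.comp_id, LinearMap.id_comp,
        TensorProduct.map_map_comp_assoc_eq]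
    have hFX0 : TensorProduct.map (α ^ n)
          (TensorProduct.map (TensorProduct.map (α ^ n) (α ^ n)) (α ^ n))
          (TensorProduct.map α (TensorProduct.map Δ α) Φ)
        = TensorProduct.map α (TensorProduct.map Δ α) Φ := by
      rw [map_apply_map, ← TensorProduct.map_comp, hΔTf, hTαf,
        TensorProduct.map_comp, TensorProduct.map_comp, LinearMap.comp_apply, hTΦ n]
    have hFY : TensorProduct.map (α ^ n)
          (TensorProduct.map (α ^ n) (TensorProduct.map (α ^ n) (α ^ n)))
          (TensorProduct.map LinearMap.id (TensorProduct.assoc K A A A).toLinearMap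
            (TensorProduct.assoc K A (A ⊗[K] A) A (Φ ⊗ₜ[K] one)))
        = TensorProduct.map LinearMap.id (TensorProduct.assoc K A A A).toLinearMap
            (TensorProduct.assoc K A (A ⊗[K] A) A (Φ ⊗ₜ[K] one)) := by
      rw [hFmapassoc, TensorProduct.map_map_assoc, TensorProduct.map_tmul, hTΦ n, hTone n]
    have hFX : TensorProduct.map (α ^ n)
          (TensorProduct.map (α ^ n) (TensorProduct.map (α ^ n) (α ^ n)))
          (TensorProduct.map LinearMap.id (TensorProduct.assoc K A A A).toLinearMap
            (TensorProduct.map α (TensorProduct.map Δ α) Φ))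
        = TensorProduct.map LinearMap.id (TensorProduct.assoc K A A A).toLinearMap
            (TensorProduct.map α (TensorProduct.map Δ α) Φ) := by
      rw [hFmapassoc, hFX0]
    simp only [mul4]
    rw [ha1, ha2, ha3, hpent]
    rw [show TensorProduct.map (α ^ n)
          (TensorProduct.map (α ^ n) (TensorProduct.map (α ^ n) (α ^ n)))
          ((TensorProduct.map LinearMap.id (TensorProduct.assoc K A A A).toLinearMap
              (TensorProduct.map α (TensorProduct.map Δ α) Φ))
            * (TensorProduct.map LinearMap.id (TensorProduct.assoc K A A A).toLinearMap
              (TensorProduct.assoc K A (A ⊗[K] A) A (Φ ⊗ₜ[K] one))))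
        = (TensorProduct.map LinearMap.id (TensorProduct.assoc K A A A).toLinearMap
              (TensorProduct.map α (TensorProduct.map Δ α) Φ))
            * (TensorProduct.map LinearMap.id (TensorProduct.assoc K A A A).toLinearMap
              (TensorProduct.assoc K A (A ⊗[K] A) A (Φ ⊗ₜ[K] one)))
      from by rw [m4, hFX, hFY]]
  · -- ε_mid
    exact hA.ε_mid
end
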